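/- Let λ ∈ (h*)^m ∖ {0}, λ' ∈ (h*)^{m'}, let a ∈ ℂ^m and a' ∈ ℂ^{m'} have nonzero pairwise distinct entries, and let L and L' be irreducible ĝ-modules such that for every w ∈ L and w' ∈ L' there exists k ∈ ℕ with (g⊗t^kℂ[t])·w = 0 and (g⊗t^kℂ[t])·w' = 0. Then E(λ,a)⊗L ≅ E(λ',a')⊗L' as ĝ-modules if and only if E(λ,a) ≅ E(λ',a') and L ≅ L' as ĝ-modules. -/

import Mathlib

/- Common framework for formalizing statements from
   "Irreducible modules over affine Kac–Moody algebras which are locally finite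
    over the positive part" (Guo–Zhao).

   Conventions:
   * `g` is a finite-dimensional simple complex Lie algebra.
   * The loop algebra `g ⊗ ℂ[t,t⁻¹]` is modelled by the vector space `ℤ →₀ g`
     (`Finsupp.single p x` corresponds to `x ⊗ tᵖ`).
   * The affine algebra `ĝ = g ⊗ ℂ[t,t⁻¹] ⊕ ℂK` is any Lie algebra equipped with
     an `AffineAlg` structure (a linear equivalence with `(ℤ →₀ g) × ℂ` fixing the
     bracket on generators, where `(0,1)` is the central element `K`).
   * Similarly `t̃g = ĝ ⊕ ℂd` is any Lie algebra with an `AffineAlgD` structure on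
     `(ℤ →₀ g) × ℂ × ℂ`, where `(0,1,0) = K` and `(0,0,1) = d`.
   * The current algebra `g ⊗ ℂ[t]` is `Polynomial ℂ ⊗[ℂ] g`, and the positive part
     `ñ₊ = (g ⊗ tℂ[t]) ⊕ (n₊ ⊗ 1)` is any Lie algebra `nt` with an `NtAlg` structure:
     an injective Lie algebra morphism into the current algebra with range `ñ₊`.
   * Induced modules are specified by structures that pin them down uniquely up to
     isomorphism (`IndModule` via the PBW description `ℂ[d] ⊗ M`, and universal
     properties for induction from `ñ₊`).
-/

open scoped TensorProduct
open Polynomial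

noncomputable section

namespace AffinePaper

attribute [local instance 100] LieRing.ofAssociativeRing

variable (g : Type) [LieRing g] [LieAlgebra ℂ g]

/-- The current algebra `g ⊗ ℂ[t]` is a complex Lie algebra. -/
instance : LieAlgebra ℂ (Polynomial ℂ ⊗[ℂ] g) where
  lie_smul c x y := by
    rw [← algebraMap_smul (Polynomial ℂ) c y, ← algebraMap_smul (Polynomial ℂ) c ⁅x, y⁆]
    exact lie_smul (algebraMap ℂ (Polynomial ℂ) c) x y

/-- The weight space of `ad H` on `g` for a functional `α` on a subalgebra `H`. -/
def wtSpace (H : LieSubalgebra ℂ g) (α : Module.Dual ℂ H) : Submodule ℂ g where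
  carrier := {x : g | ∀ h : H, ⁅(h : g), x⁆ = α h • x}
  add_mem' := fun {a b} ha hb h => by rw [lie_add, ha h, hb h, smul_add]
  zero_mem' := fun h => by rw [lie_zero, smul_zero]
  smul_mem' := fun c x hx h => by rw [lie_smul, hx h]; exact smul_comm c (α h) x

/-- `α` is a root of `(g, H)`. -/
def IsRootOf (H : LieSubalgebra ℂ g) (α : Module.Dual ℂ H) : Prop :=
  α ≠ 0 ∧ wtSpace g H α ≠ ⊥

/-- A triangular decomposition `g = n₋ ⊕ h ⊕ n₊` of `g` relative to a Cartan
subalgebra `H`, given by a positive system `P` of roots. -/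
structure TriangularData where
  H : LieSubalgebra ℂ g
  nPos : LieSubalgebra ℂ g
  nNeg : LieSubalgebra ℂ g
  isCartan : H.IsCartanSubalgebra
  P : Set (Module.Dual ℂ H)
  pos_isRoot : ∀ α ∈ P, IsRootOf g H α
  pos_neg : ∀ α, IsRootOf g H α → (α ∈ P ↔ -α ∉ P)
  nPos_eq : nPos.toSubmodule = ⨆ α ∈ P, wtSpace g H α
  nNeg_eq : nNeg.toSubmodule = ⨆ α ∈ P, wtSpace g H (-α)
  triang : nNeg.toSubmodule ⊔ H.toSubmodule ⊔ nPos.toSubmodule = ⊤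

variable {g}

/-- The simple roots of a positive system: the positive roots that are not sums of
two positive roots. -/
def TriangularData.simpleRoots (D : TriangularData g) : Set (Module.Dual ℂ D.H) :=
  {α | α ∈ D.P ∧ ¬∃ β ∈ D.P, ∃ γ ∈ D.P, α = β + γ}

/-- `θ` is the highest root. -/
def TriangularData.IsHighestRoot (D : TriangularData g) (θ : Module.Dual ℂ D.H) : Prop :=
  θ ∈ D.P ∧ ∀ α ∈ D.P, ¬ IsRootOf g D.H (θ + α)

/-- `lam ∈ h*` is dominant integral: it takes nonnegative integer values on all
coroots (elements `hc = ⁅e, f⁆ ∈ [g_α, g_{-α}]` with `α hc = 2`, `α` positive). -/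
def IsDominantIntegral (D : TriangularData g) (lam : Module.Dual ℂ D.H) : Prop :=
  ∀ α ∈ D.P, ∀ (e f : g) (hc : D.H), e ∈ wtSpace g D.H α → f ∈ wtSpace g D.H (-α) →
    ⁅e, f⁆ = (hc : g) → α hc = 2 → ∃ n : ℕ, lam hc = (n : ℂ)

variable (g)

/-- The subspace `I(f) = n₊ ⊗ f ℂ[t] + (h ⊕ n₋) ⊗ t f ℂ[t]` of the current algebra. -/
def idealI (D : TriangularData g) (f : Polynomial ℂ) : Submodule ℂ (Polynomial ℂ ⊗[ℂ] g) :=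
  Submodule.span ℂ
    ({z | ∃ x ∈ D.nPos, ∃ p : Polynomial ℂ, z = (f * p) ⊗ₜ[ℂ] x} ∪
     {z | ∃ x : g, x ∈ D.H.toSubmodule ⊔ D.nNeg.toSubmodule ∧
        ∃ p : Polynomial ℂ, z = (X * f * p) ⊗ₜ[ℂ] x})

/-- The subspace `Σ_{α∈Δ₊∖Π} g_α ⊗ fℂ[t] + Σ_{α∈Π} g_α ⊗ tfℂ[t] +
Σ_{α∈Δ₊∖{θ}} g_{−α} ⊗ tfℂ[t] + g_{−θ} ⊗ t²fℂ[t] + h ⊗ tfℂ[t]` of the current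
algebra (`θ` the highest root); for `f = 1` this is the subspace `K` of Lemma 4.2. -/
def bigK (D : TriangularData g) (θ : Module.Dual ℂ D.H) (f : Polynomial ℂ) :
    Submodule ℂ (Polynomial ℂ ⊗[ℂ] g) :=
  Submodule.span ℂ
    ({z | ∃ α ∈ D.P, α ∉ D.simpleRoots ∧
        ∃ x ∈ wtSpace g D.H α, ∃ p : Polynomial ℂ, z = (f * p) ⊗ₜ[ℂ] x} ∪
     {z | ∃ α ∈ D.simpleRoots,
        ∃ x ∈ wtSpace g D.H α, ∃ p : Polynomial ℂ, z = (X * f * p) ⊗ₜ[ℂ] x} ∪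
     {z | ∃ α ∈ D.P, α ≠ θ ∧
        ∃ x ∈ wtSpace g D.H (-α), ∃ p : Polynomial ℂ, z = (X * f * p) ⊗ₜ[ℂ] x} ∪
     {z | ∃ x ∈ wtSpace g D.H (-θ), ∃ p : Polynomial ℂ, z = (X ^ 2 * f * p) ⊗ₜ[ℂ] x} ∪
     {z | ∃ x ∈ D.H, ∃ p : Polynomial ℂ, z = (X * f * p) ⊗ₜ[ℂ] x})

/-- The subspace of the current algebra corresponding to
`ñ₊ = (g ⊗ tℂ[t]) ⊕ (n₊ ⊗ 1)`. -/
def ntModel (D : TriangularData g) : Submodule ℂ (Polynomial ℂ ⊗[ℂ] g) :=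
  Submodule.span ℂ
    ({z | ∃ (k : ℕ) (x : g), 1 ≤ k ∧ z = (X ^ k : Polynomial ℂ) ⊗ₜ[ℂ] x} ∪
     {z | ∃ x ∈ D.nPos, z = (1 : Polynomial ℂ) ⊗ₜ[ℂ] x})

/-- A realization of the Lie algebra `ñ₊`: a Lie algebra `nt` together with an
injective morphism to the current algebra with range `(g ⊗ tℂ[t]) ⊕ (n₊ ⊗ 1)`. -/
structure NtAlg (D : TriangularData g) (nt : Type) [LieRing nt] [LieAlgebra ℂ nt] where
  ι : nt →ₗ⁅ℂ⁆ Polynomial ℂ ⊗[ℂ] g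
  inj : Function.Injective ι
  range_eq : LinearMap.range (ι.toLinearMap) = ntModel g D

/-- Evaluation of the current algebra at a point `a ∈ ℂ`: `x ⊗ p(t) ↦ p(a) • x`. -/
def ev (a : ℂ) : (Polynomial ℂ ⊗[ℂ] g) →ₗ[ℂ] g :=
  (TensorProduct.lid ℂ g).toLinearMap ∘ₗ
    (TensorProduct.map (Polynomial.aeval a).toLinearMap LinearMap.id)

/-- The canonical embedding of the current algebra `g ⊗ ℂ[t]` into the model
`ℤ →₀ g` of the loop algebra `g ⊗ ℂ[t,t⁻¹]` (sending `x ⊗ tᵏ` to `single k x`). -/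
def toLoop : (Polynomial ℂ ⊗[ℂ] g) →ₗ[ℂ] (ℤ →₀ g) :=
  (Finsupp.lmapDomain g ℂ (Nat.cast : ℕ → ℤ)) ∘ₗ
    (TensorProduct.finsuppScalarLeft ℂ g ℕ).toLinearMap ∘ₗ
    (TensorProduct.congr ((Polynomial.toFinsuppIsoLinear ℂ).trans (AddMonoidAlgebra.coeffLinearEquiv ℂ))
      (LinearEquiv.refl ℂ g)).toLinearMap

/-- A weight vector of `ñ₊` (viewed inside the current algebra): a nonzero element
`x ⊗ tᵏ` with `x` in `h` or in a root space. -/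
def IsWeightVec (D : TriangularData g) (w : Polynomial ℂ ⊗[ℂ] g) : Prop :=
  w ≠ 0 ∧ ∃ (k : ℕ) (x : g), w = (X ^ k : Polynomial ℂ) ⊗ₜ[ℂ] x ∧
    (x ∈ D.H ∨ ∃ α, IsRootOf g D.H α ∧ x ∈ wtSpace g D.H α)

/-- An element `z` of a Lie algebra `L` acts locally finitely on a module `V`. -/
def ActsLocallyFinitely (L : Type) [LieRing L] (V : Type) [AddCommGroup V] [Module ℂ V]
    [LieRingModule L V] (z : L) : Prop :=
  ∀ v : V, ∃ W : Submodule ℂ V, v ∈ W ∧ FiniteDimensional ℂ W ∧ ∀ w ∈ W, ⁅z, w⁆ ∈ W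

/-- A realization of the affine Lie algebra `ĝ = (g ⊗ ℂ[t,t⁻¹]) ⊕ ℂK` (without
derivation): a Lie algebra `gh` with a linear equivalence `e` with the model space
`(ℤ →₀ g) × ℂ` such that `e (single p x, 0) = x ⊗ tᵖ`, `e (0,1) = K` is central, and
`[x ⊗ tᵖ, y ⊗ t^q] = [x,y] ⊗ t^{p+q} + p δ_{p+q,0} κ(x,y) K`, `κ` the Killing form. -/
structure AffineAlg (gh : Type) [LieRing gh] [LieAlgebra ℂ gh] where
  e : ((ℤ →₀ g) × ℂ) ≃ₗ[ℂ] gh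
  brkt : ∀ (p q : ℤ) (x y : g),
    ⁅e (Finsupp.single p x, 0), e (Finsupp.single q y, 0)⁆ =
      e (Finsupp.single (p + q) ⁅x, y⁆,
        if p + q = 0 then (p : ℂ) * killingForm ℂ g x y else 0)
  central : ∀ z : gh, ⁅e (0, 1), z⁆ = 0

/-- A realization of the affine Kac–Moody algebra `t̃g = (g ⊗ ℂ[t,t⁻¹]) ⊕ ℂK ⊕ ℂd`:
as in `AffineAlg`, with moreover `e (0,0,1) = d` satisfying `[d, x ⊗ tᵖ] = p x ⊗ tᵖ`. -/
structure AffineAlgD (gt : Type) [LieRing gt] [LieAlgebra ℂ gt] where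
  e : ((ℤ →₀ g) × ℂ × ℂ) ≃ₗ[ℂ] gt
  brkt : ∀ (p q : ℤ) (x y : g),
    ⁅e (Finsupp.single p x, 0, 0), e (Finsupp.single q y, 0, 0)⁆ =
      e (Finsupp.single (p + q) ⁅x, y⁆,
        (if p + q = 0 then (p : ℂ) * killingForm ℂ g x y else 0), 0)
  central : ∀ z : gt, ⁅e (0, 1, 0), z⁆ = 0
  dBrkt : ∀ (p : ℤ) (x : g),
    ⁅e (0, 0, 1), e (Finsupp.single p x, 0, 0)⁆ = e (Finsupp.single p ((p : ℂ) • x), 0, 0)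

variable {g}

/-- `V` is the irreducible highest weight `g`-module with highest weight `lam`:
it is irreducible and has a highest weight vector of weight `lam`. -/
structure IsHWModule (D : TriangularData g) (lam : Module.Dual ℂ D.H) (V : Type)
    [AddCommGroup V] [Module ℂ V] [LieRingModule g V] [LieModule ℂ g V] where
  v₀ : V
  ne : v₀ ≠ 0
  hwN : ∀ x ∈ D.nPos, ⁅x, v₀⁆ = 0
  hwH : ∀ h : D.H, ⁅(h : g), v₀⁆ = lam h • v₀
  irred : IsSimpleOrder (LieSubmodule ℂ g V)

/-- `E` is the evaluation module `E(λ, a) = V₁ ⊗ ⋯ ⊗ V_m` over `ĝ`: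
`(x ⊗ tᵏ) · (v₁ ⊗ ⋯ ⊗ v_m) = Σᵢ aᵢᵏ v₁ ⊗ ⋯ ⊗ (x · vᵢ) ⊗ ⋯ ⊗ v_m`, and `K` acts by `0`. -/
structure EvalModule {gh : Type} [LieRing gh] [LieAlgebra ℂ gh] (A : AffineAlg g gh)
    {m : ℕ} (a : Fin m → ℂ) (V : Fin m → Type) [∀ i, AddCommGroup (V i)]
    [∀ i, Module ℂ (V i)] [∀ i, LieRingModule g (V i)] [∀ i, LieModule ℂ g (V i)]
    (E : Type) [AddCommGroup E] [Module ℂ E] [LieRingModule gh E] [LieModule ℂ gh E] where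
  ψ : E ≃ₗ[ℂ] PiTensorProduct ℂ V
  act : ∀ (k : ℤ) (x : g) (v : ∀ i, V i),
    ⁅A.e (Finsupp.single k x, 0), ψ.symm (PiTensorProduct.tprod ℂ v)⁆ =
      ∑ i, (a i) ^ k • ψ.symm (PiTensorProduct.tprod ℂ (Function.update v i ⁅x, v i⁆))
  kAct : ∀ w : E, ⁅A.e (0, 1), w⁆ = 0

/-- `V` is the `t̃g`-module `M[d] = Ind_{ĝ}^{t̃g} M` induced from a `ĝ`-module `M`.
As a vector space `M[d] = ℂ[d] ⊗ M` (modelled by `ℕ →₀ M`, `single n v = dⁿ ⊗ v`);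
`d` shifts the degree and `ĝ` acts on `d⁰ ⊗ M` as on `M`.  These data determine the
`t̃g`-module structure uniquely. -/
structure IndModule {gh gt : Type} [LieRing gh] [LieAlgebra ℂ gh] [LieRing gt]
    [LieAlgebra ℂ gt] (T : AffineAlgD g gt) (A : AffineAlg g gh)
    (M : Type) [AddCommGroup M] [Module ℂ M] [LieRingModule gh M]
    (V : Type) [AddCommGroup V] [Module ℂ V] [LieRingModule gt V] where
  φ : (ℕ →₀ M) ≃ₗ[ℂ] V
  dAct : ∀ (n : ℕ) (v : M),
    ⁅T.e (0, 0, 1), φ (Finsupp.single n v)⁆ = φ (Finsupp.single (n + 1) v)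
  rest : ∀ (u : (ℤ →₀ g) × ℂ) (v : M),
    ⁅T.e (u.1, u.2, 0), φ (Finsupp.single 0 v)⁆ = φ (Finsupp.single 0 ⁅A.e u, v⁆)

/-- `S` is the `ñ₊`-module `S(η, λ, a) = ℂ v_η ⊗ L(λ₁) ⊗ ⋯ ⊗ L(λ_m)`:
`(x ⊗ p(t)) · (v₁ ⊗ ⋯ ⊗ v_m) = η(x ⊗ p(t)) (v₁ ⊗ ⋯ ⊗ v_m) + Σᵢ p(aᵢ) v₁ ⊗ ⋯ ⊗ (x vᵢ) ⊗ ⋯ ⊗ v_m`. -/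
structure SModule {nt : Type} [LieRing nt] [LieAlgebra ℂ nt] {D : TriangularData g}
    (NT : NtAlg g D nt) (η : nt →ₗ⁅ℂ⁆ ℂ) {m : ℕ} (a : Fin m → ℂ)
    (V : Fin m → Type) [∀ i, AddCommGroup (V i)] [∀ i, Module ℂ (V i)]
    [∀ i, LieRingModule g (V i)]
    (S : Type) [AddCommGroup S] [Module ℂ S] [LieRingModule nt S] where
  ψ : S ≃ₗ[ℂ] PiTensorProduct ℂ V
  act : ∀ (z : nt) (v : ∀ i, V i),
    ⁅z, ψ.symm (PiTensorProduct.tprod ℂ v)⁆ = η z • ψ.symm (PiTensorProduct.tprod ℂ v) +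
      ∑ i, ψ.symm (PiTensorProduct.tprod ℂ (Function.update v i ⁅ev g (a i) (NT.ι z), v i⁆))

/-- `V` is the irreducible highest weight `ĝ`-module with highest weight
`γ ∈ (h ⊕ ℂK)*`. -/
structure HWModuleAff {gh : Type} [LieRing gh] [LieAlgebra ℂ gh] (A : AffineAlg g gh)
    (D : TriangularData g) (γ : Module.Dual ℂ (↥D.H × ℂ)) (V : Type)
    [AddCommGroup V] [Module ℂ V] [LieRingModule gh V] [LieModule ℂ gh V] where
  v₀ : V
  ne : v₀ ≠ 0
  hwLoop : ∀ k : ℕ, 1 ≤ k → ∀ x : g, ⁅A.e (Finsupp.single (k : ℤ) x, 0), v₀⁆ = 0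
  hwN : ∀ x ∈ D.nPos, ⁅A.e (Finsupp.single 0 x, 0), v₀⁆ = 0
  hwH : ∀ (h : D.H) (c : ℂ), ⁅A.e (Finsupp.single 0 (h : g), c), v₀⁆ = γ (h, c) • v₀
  irred : IsSimpleOrder (LieSubmodule ℂ gh V)

/-- `W` is an irreducible Whittaker `ĝ`-module of type `η : ñ₊ → ℂ`. -/
structure WhittakerAff {gh : Type} [LieRing gh] [LieAlgebra ℂ gh] (A : AffineAlg g gh)
    {D : TriangularData g} {nt : Type} [LieRing nt] [LieAlgebra ℂ nt] (NT : NtAlg g D nt)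
    (η : nt →ₗ⁅ℂ⁆ ℂ) (W : Type)
    [AddCommGroup W] [Module ℂ W] [LieRingModule gh W] [LieModule ℂ gh W] where
  v₀ : W
  ne : v₀ ≠ 0
  wh : ∀ z : nt, ⁅A.e (toLoop g (NT.ι z), 0), v₀⁆ = η z • v₀
  irred : IsSimpleOrder (LieSubmodule ℂ gh W)

/-- `MS` is the induced `ĝ`-module `Ind_{ñ₊}^{ĝ} S`, characterized by its universal
property. -/
structure IndFromNt {gh : Type} [LieRing gh] [LieAlgebra ℂ gh] (A : AffineAlg g gh)
    {D : TriangularData g} {nt : Type} [LieRing nt] [LieAlgebra ℂ nt] (NT : NtAlg g D nt)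
    (S : Type) [AddCommGroup S] [Module ℂ S] [LieRingModule nt S]
    (MS : Type) [AddCommGroup MS] [Module ℂ MS] [LieRingModule gh MS]
    [LieModule ℂ gh MS] where
  ι₀ : S →ₗ[ℂ] MS
  compat : ∀ (z : nt) (s : S), ⁅A.e (toLoop g (NT.ι z), 0), ι₀ s⁆ = ι₀ ⁅z, s⁆
  univ : ∀ (W : Type) [AddCommGroup W] [Module ℂ W] [LieRingModule gh W]
    [LieModule ℂ gh W] (f : S →ₗ[ℂ] W),
    (∀ (z : nt) (s : S), ⁅A.e (toLoop g (NT.ι z), 0), f s⁆ = f ⁅z, s⁆) →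
    ∃! F : MS →ₗ⁅ℂ,gh⁆ W, F.toLinearMap ∘ₗ ι₀ = f

/-- `M0` is the universal Whittaker module `M(η) = Ind_{ñ₊}^{ĝ} ℂ_η`, characterized
by its universal property. -/
structure UnivWhittaker {gh : Type} [LieRing gh] [LieAlgebra ℂ gh] (A : AffineAlg g gh)
    {D : TriangularData g} {nt : Type} [LieRing nt] [LieAlgebra ℂ nt] (NT : NtAlg g D nt)
    (η : nt →ₗ⁅ℂ⁆ ℂ) (M0 : Type) [AddCommGroup M0] [Module ℂ M0] [LieRingModule gh M0]
    [LieModule ℂ gh M0] where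
  u₀ : M0
  rel : ∀ z : nt, ⁅A.e (toLoop g (NT.ι z), 0), u₀⁆ = η z • u₀
  univ : ∀ (W : Type) [AddCommGroup W] [Module ℂ W] [LieRingModule gh W]
    [LieModule ℂ gh W] (w : W),
    (∀ z : nt, ⁅A.e (toLoop g (NT.ι z), 0), w⁆ = η z • w) →
    ∃! F : M0 →ₗ⁅ℂ,gh⁆ W, F u₀ = w

variable (g)

/-- A bundled Lie module over a complex Lie algebra `L`. -/
structure LieModOf (L : Type) [LieRing L] [LieAlgebra ℂ L] : Type 1 where
  carrier : Type
  [ac : AddCommGroup carrier]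
  [mo : Module ℂ carrier]
  [lrm : LieRingModule L carrier]
  [lm : LieModule ℂ L carrier]

attribute [instance] LieModOf.ac LieModOf.mo LieModOf.lrm LieModOf.lm

/-!
Elements `A.e (u, c)` of `ĝ` whose loop part `u` vanishes at every evaluation point annihilate
`E` and `E'`. Since every vector of `L` and `L'` is killed by `g ⊗ tᵏℂ[t]` for large `k`,
Lagrange interpolation shows that on any two given vectors of `L, L'` these elements act like
arbitrary elements of `ĝ`. So an isomorphism `Φ : E ⊗ L ≅ E' ⊗ L'` only has to be compatible
with an algebra that acts on the second tensor factor alone. A coordinate of `w ↦ Φ (u₀ ⊗ w)`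
then is a nonzero homomorphism `θ : L → L'`, an isomorphism by Schur's lemma. As `L'` has
countable dimension over the uncountable field `ℂ`, Dixmier's lemma makes the commutant of that
algebra on `L'` scalar, which forces `Φ ∘ (1 ⊗ θ⁻¹) = γ ⊗ 1` with `γ : E ≅ E'`.
-/

section Schur

open Cardinal

variable {K 𝔤 M N : Type*} [Field K] [LieRing 𝔤]
  [AddCommGroup M] [Module K M] [LieRingModule 𝔤 M]
  [AddCommGroup N] [Module K N] [LieRingModule 𝔤 N]

theorem LieModuleHom.bijective_of_ne_zero [LieModule.IsIrreducible K 𝔤 M]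
    [LieModule.IsIrreducible K 𝔤 N] {f : M →ₗ⁅K,𝔤⁆ N} (hf : f ≠ 0) : Function.Bijective f := by
  refine ⟨(LieModuleHom.ker_eq_bot f).mp ?_, (LieModuleHom.range_eq_top f).mp ?_⟩
  · refine (IsSimpleOrder.eq_bot_or_eq_top f.ker).resolve_right fun h => hf ?_
    ext w
    exact LieModuleHom.mem_ker.mp (h ▸ LieSubmodule.mem_top w)
  · refine (IsSimpleOrder.eq_bot_or_eq_top f.range).resolve_left fun h => hf ?_
    ext w
    exact (LieSubmodule.mem_bot _).mp (h ▸ (f.mem_range (f w)).mpr ⟨w, rfl⟩)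

def lieModuleEquivOfBijective (f : M →ₗ⁅K,𝔤⁆ N) (hf : Function.Bijective f) : M ≃ₗ⁅K,𝔤⁆ N :=
  { f, LinearEquiv.ofBijective (f : M →ₗ[K] N) hf with }

theorem Module.End.injective_aeval [IsAlgClosed K] {f : Module.End K M}
    (hf : ∀ c : K, Function.Injective (f - algebraMap K (Module.End K M) c))
    {p : K[X]} (hp : p ≠ 0) : Function.Injective (aeval f p) := by
  rw [(IsAlgClosed.splits p).eq_prod_roots, map_mul, aeval_C]
  refine (smul_right_injective M (leadingCoeff_ne_zero.mpr hp)).comp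
    (Multiset.prod_induction (fun q => Function.Injective (aeval f q)) _
      (fun a b ha hb => by rw [map_mul]; exact ha.comp hb)
      (by rw [map_one]; exact Function.injective_id) ?_)
  intro q hq
  obtain ⟨r, -, rfl⟩ := Multiset.mem_map.mp hq
  simpa using hf r

theorem linearIndependent_of_sub_apply_eq [IsAlgClosed K] {f : Module.End K M}
    (hf : ∀ c : K, Function.Injective (f - algebraMap K (Module.End K M) c))
    {w : M} (hw : w ≠ 0) {v : K → M} (hv : ∀ c, (f - algebraMap K (Module.End K M) c) (v c) = w) :
    LinearIndependent K v := by
  classical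
  refine linearIndependent_iff'.mpr fun s μ hμ i hi => ?_
  have hnodal : ∀ c ∈ s, aeval f (Lagrange.nodal s id) (v c) =
      aeval f (Lagrange.nodal (s.erase c) id) w := by
    intro c hc
    rw [Lagrange.nodal_eq_mul_nodal_erase hc, mul_comm, map_mul, Module.End.mul_apply, map_sub,
      aeval_X, aeval_C, id, hv]
  set p := ∑ c ∈ s, μ c • Lagrange.nodal (s.erase c) id
  have hp : p = 0 := by
    by_contra hp
    refine hw (Module.End.injective_aeval hf hp ?_)
    calc aeval f p w = ∑ c ∈ s, μ c • aeval f (Lagrange.nodal (s.erase c) id) w := by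
          simp [p, map_sum, LinearMap.sum_apply]
      _ = aeval f (Lagrange.nodal s id) (∑ c ∈ s, μ c • v c) := by
          rw [map_sum]
          exact Finset.sum_congr rfl fun c hc => by rw [map_smul, hnodal c hc]
      _ = aeval f p 0 := by rw [hμ, map_zero, map_zero]
  have hpi := congrArg (eval i) hp
  rw [eval_finsetSum, Finset.sum_eq_single i, eval_smul, smul_eq_mul, eval_zero] at hpi
  · exact (mul_eq_zero.mp hpi).resolve_right
      (Lagrange.eval_nodal_not_at_node fun c hc => (Finset.ne_of_mem_erase hc).symm)
  · intro c _ hci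
    rw [eval_smul, show eval i (Lagrange.nodal (s.erase c) id) = 0 from
      Lagrange.eval_nodal_at_node (v := id) (Finset.mem_erase.mpr ⟨hci.symm, hi⟩), smul_zero]
  · exact absurd hi

/-- Dixmier's version of Schur's lemma. -/
theorem LieModuleHom.exists_eq_smul_id [LieAlgebra K 𝔤] [LieModule K 𝔤 M] [IsAlgClosed K]
    [LieModule.IsIrreducible K 𝔤 M] (hK : ℵ₀ < #K) (hM : Module.rank K M ≤ ℵ₀) (f : M →ₗ⁅K,𝔤⁆ M) :
    ∃ c : K, f = c • LieModuleHom.id := by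
  by_contra! h
  have := (LieSubmodule.nontrivial_iff K 𝔤 M).mp inferInstance
  obtain ⟨w, hw⟩ := exists_ne (0 : M)
  have hcoe : ∀ c : K, ⇑((f : Module.End K M) - algebraMap K (Module.End K M) c) =
      ⇑(f - c • LieModuleHom.id : M →ₗ⁅K,𝔤⁆ M) :=
    fun c => funext fun _ => by simp
  have hbij : ∀ c : K,
      Function.Bijective ((f : Module.End K M) - algebraMap K (Module.End K M) c) := by
    intro c
    rw [hcoe c]
    exact LieModuleHom.bijective_of_ne_zero (sub_ne_zero.mpr (h c))
  choose v hv using fun c : K => (hbij c).2 w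
  have hle := (linearIndependent_of_sub_apply_eq (fun c => (hbij c).1) hw hv).cardinal_lift_le_rank
  exact (hle.trans (Cardinal.lift_le_aleph0.mpr hM)).not_gt (Cardinal.aleph0_lt_lift.mpr hK)

end Schur

section CountableRank

open Cardinal

variable {K 𝔤 M : Type*} [Field K] [LieRing 𝔤] [LieAlgebra K 𝔤]
  [AddCommGroup M] [Module K M] [LieRingModule 𝔤 M] [LieModule K 𝔤 M]

theorem LieModule.rank_le_aleph0 [LieModule.IsIrreducible K 𝔤 M] (h𝔤 : Module.rank K 𝔤 ≤ ℵ₀) :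
    Module.rank K M ≤ ℵ₀ := by
  have := (LieSubmodule.nontrivial_iff K 𝔤 M).mp inferInstance
  obtain ⟨w₀, hw₀⟩ := exists_ne (0 : M)
  let b := Module.Basis.ofVectorSpace K 𝔤
  have : Countable (Module.Basis.ofVectorSpaceIndex K 𝔤) := by
    rw [← Cardinal.mk_le_aleph0_iff, b.mk_eq_rank'']
    exact h𝔤
  -- the vectors `⁅b j₁, ⁅b j₂, …, ⁅b jₙ, w₀⁆…⁆⁆` span a Lie submodule, hence all of `M`
  let F : List (Module.Basis.ofVectorSpaceIndex K 𝔤) → M := fun l => l.foldr (⁅b ·, ·⁆) w₀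
  let W : LieSubmodule K 𝔤 M :=
    { Submodule.span K (Set.range F) with
      lie_mem := fun {x w} hw => by
        induction hw using Submodule.span_induction with
        | mem w hw =>
          obtain ⟨l, rfl⟩ := hw
          have hx : x ∈ Submodule.span K (Set.range b) := b.span_eq ▸ Submodule.mem_top
          induction hx using Submodule.span_induction with
          | mem y hy =>
            obtain ⟨j, rfl⟩ := hy
            exact Submodule.subset_span ⟨j :: l, rfl⟩
          | zero => simp
          | add y y' _ _ hy hy' => rw [add_lie]; exact Submodule.add_mem _ hy hy'
          | smul c y _ hy => rw [smul_lie]; exact Submodule.smul_mem _ c hy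
        | zero => simp
        | add w w' _ _ hw hw' => rw [lie_add]; exact Submodule.add_mem _ hw hw'
        | smul c w _ hw => rw [lie_smul]; exact Submodule.smul_mem _ c hw }
  have hw₀W : w₀ ∈ W := Submodule.subset_span ⟨[], rfl⟩
  have hW : W = ⊤ := (IsSimpleOrder.eq_bot_or_eq_top W).resolve_left fun h =>
    hw₀ ((LieSubmodule.mem_bot w₀).mp (h ▸ hw₀W))
  calc Module.rank K M = Module.rank K (Submodule.span K (Set.range F)) := by
        rw [← rank_top K M]
        exact congrArg (fun S : Submodule K M => Module.rank K S)
          (congrArg LieSubmodule.toSubmodule hW).symm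
    _ ≤ #(Set.range F) := rank_span_le _
    _ ≤ ℵ₀ := Cardinal.le_aleph0_iff_set_countable.mpr (Set.countable_range F)

end CountableRank

section TensorProduct

variable {K E E' L : Type*} [Field K] [AddCommGroup E] [Module K E] [AddCommGroup E'] [Module K E']
  [AddCommGroup L] [Module K L]

theorem tmul_ne_zero {u : E} {w : L} (hu : u ≠ 0) (hw : w ≠ 0) : u ⊗ₜ[K] w ≠ 0 := by
  classical
  let b := Module.Basis.ofVectorSpace K E
  obtain ⟨i, hi⟩ : ∃ i, b.repr u i ≠ 0 := by
    by_contra! h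
    exact hu (b.repr.map_eq_zero_iff.mp (Finsupp.ext h))
  intro h
  have := congrArg (fun t => TensorProduct.equivFinsuppOfBasisLeft b t i) h
  simp only [TensorProduct.equivFinsuppOfBasisLeft_apply_tmul_apply, map_zero,
    Finsupp.coe_zero, Pi.zero_apply] at this
  exact (smul_eq_zero.mp this).elim hi hw

theorem tmul_left_injective {w : L} (hw : w ≠ 0) :
    Function.Injective (fun u : E => u ⊗ₜ[K] w) := fun u u' h => by
  by_contra hne
  exact tmul_ne_zero (K := K) (sub_ne_zero.mpr hne) hw
    (by rw [TensorProduct.sub_tmul]; exact sub_eq_zero.mpr h)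

theorem eq_of_rTensor_eq [Nontrivial L] {f f' : E →ₗ[K] E'} (h : f.rTensor L = f'.rTensor L) :
    f = f' := by
  obtain ⟨w, hw⟩ := exists_ne (0 : L)
  ext u
  have := congrArg (fun φ : E ⊗[K] L →ₗ[K] E' ⊗[K] L => φ (u ⊗ₜ w)) h
  exact tmul_left_injective hw (by simpa using this)

end TensorProduct

section Cancellation

open Cardinal TensorProduct

variable {K 𝔤 : Type*} [Field K] [LieRing 𝔤] [LieAlgebra K 𝔤]

section Defs

variable (K) (P : Set 𝔤) (M N : Type*) [AddCommGroup M] [Module K M] [LieRingModule 𝔤 M]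
  [AddCommGroup N] [LieRingModule 𝔤 N]

def IsDenseOn : Prop :=
  ∀ (x : 𝔤) (w : M) (w' : N), ∃ z ∈ P, ⁅z, w⁆ = ⁅x, w⁆ ∧ ⁅z, w'⁆ = ⁅x, w'⁆

def HasScalarCommutant : Prop :=
  ∀ f : Module.End K M, (∀ z ∈ P, ∀ w, f ⁅z, w⁆ = ⁅z, f w⁆) → ∃ c : K, ∀ w, f w = c • w

end Defs

variable {P : Set 𝔤}
  {M N : Type*} [AddCommGroup M] [Module K M] [LieRingModule 𝔤 M] [LieModule K 𝔤 M]
  [AddCommGroup N] [Module K N] [LieRingModule 𝔤 N] [LieModule K 𝔤 N]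

def IsDenseOn.lieModuleHom (hP : IsDenseOn P M N) (f : M →ₗ[K] N)
    (hf : ∀ z ∈ P, ∀ w, f ⁅z, w⁆ = ⁅z, f w⁆) : M →ₗ⁅K,𝔤⁆ N :=
  { f with
    map_lie' := fun {x w} => by
      obtain ⟨z, hz, h, h'⟩ := hP x w (f w)
      show f ⁅x, w⁆ = ⁅x, f w⁆
      rw [← h, ← h', hf z hz] }

theorem IsDenseOn.hasScalarCommutant [IsAlgClosed K] [LieModule.IsIrreducible K 𝔤 M]
    (hK : ℵ₀ < #K) (hM : Module.rank K M ≤ ℵ₀) (hP : IsDenseOn P M M) :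
    HasScalarCommutant K P M := fun f hf => by
  obtain ⟨c, hc⟩ := LieModuleHom.exists_eq_smul_id hK hM (hP.lieModuleHom f hf)
  exact ⟨c, fun w => congrArg (fun φ : M →ₗ⁅K,𝔤⁆ M => φ w) hc⟩

def LieModuleEquiv.tensorCongr {M' N' : Type*}
    [AddCommGroup M'] [Module K M'] [LieRingModule 𝔤 M'] [LieModule K 𝔤 M']
    [AddCommGroup N'] [Module K N'] [LieRingModule 𝔤 N'] [LieModule K 𝔤 N']
    (e : M ≃ₗ⁅K,𝔤⁆ M') (e' : N ≃ₗ⁅K,𝔤⁆ N') : M ⊗[K] N ≃ₗ⁅K,𝔤⁆ M' ⊗[K] N' :=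
  { TensorProduct.congr e.toLinearEquiv e'.toLinearEquiv with
    map_lie' := (TensorProduct.LieModule.map (e : M →ₗ⁅K,𝔤⁆ M') (e' : N →ₗ⁅K,𝔤⁆ N')).map_lie' }

variable {E E' L L' : Type*}
  [AddCommGroup E] [Module K E] [LieRingModule 𝔤 E] [LieModule K 𝔤 E]
  [AddCommGroup E'] [Module K E'] [LieRingModule 𝔤 E'] [LieModule K 𝔤 E']
  [AddCommGroup L] [Module K L] [LieRingModule 𝔤 L] [LieModule K 𝔤 L]
  [AddCommGroup L'] [Module K L'] [LieRingModule 𝔤 L'] [LieModule K 𝔤 L']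

theorem lie_tmul_of_lie_eq_zero {x : 𝔤} {u : E} (hu : ⁅x, u⁆ = 0) (w : L) :
    ⁅x, u ⊗ₜ[K] w⁆ = u ⊗ₜ ⁅x, w⁆ := by
  rw [TensorProduct.LieModule.lie_tmul_right, hu, zero_tmul, zero_add]

theorem equivFinsuppOfBasisLeft_lie {ι : Type*} [DecidableEq ι] (b : Module.Basis ι K E)
    {x : 𝔤} (hx : ∀ u : E, ⁅x, u⁆ = 0) (t : E ⊗[K] L) (i : ι) :
    equivFinsuppOfBasisLeft b ⁅x, t⁆ i = ⁅x, equivFinsuppOfBasisLeft b t i⁆ := by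
  induction t using TensorProduct.induction_on with
  | zero => simp
  | tmul u w =>
    rw [lie_tmul_of_lie_eq_zero (hx u), equivFinsuppOfBasisLeft_apply_tmul_apply,
      equivFinsuppOfBasisLeft_apply_tmul_apply, lie_smul]
  | add t t' ht ht' => rw [lie_add, map_add, map_add, Finsupp.add_apply, Finsupp.add_apply,
      lie_add, ht, ht']

theorem exists_eq_tmul_of_commute (hPE : ∀ z ∈ P, ∀ u : E, ⁅z, u⁆ = 0)
    (hL : HasScalarCommutant K P L) (f : L →ₗ[K] E ⊗[K] L)
    (hf : ∀ z ∈ P, ∀ w, f ⁅z, w⁆ = ⁅z, f w⁆) : ∃ u : E, ∀ w, f w = u ⊗ₜ w := by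
  classical
  rcases subsingleton_or_nontrivial L with hL0 | _
  · exact ⟨0, fun w => by rw [Subsingleton.elim w 0, map_zero, tmul_zero]⟩
  obtain ⟨w₀, hw₀⟩ := exists_ne (0 : L)
  let b := Module.Basis.ofVectorSpace K E
  let ρ := equivFinsuppOfBasisLeft (M := E) (N := L) b
  have hcoord : ∀ i, ∃ c : K, ∀ w, ρ (f w) i = c • w := fun i =>
    hL (Finsupp.lapply i ∘ₗ ρ.toLinearMap ∘ₗ f) fun z hz w => by
      simp only [LinearMap.comp_apply, LinearEquiv.coe_coe, Finsupp.lapply_apply, hf z hz]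
      exact equivFinsuppOfBasisLeft_lie b (hPE z hz) (f w) i
  choose c hc using hcoord
  have hfin : (Function.support c).Finite := (ρ (f w₀)).hasFiniteSupport.subset fun i hi => by
    simpa [hc i w₀, hw₀] using hi
  refine ⟨b.repr.symm (Finsupp.ofSupportFinite c hfin),
    fun w => ρ.injective (Finsupp.ext fun i => ?_)⟩
  rw [hc, equivFinsuppOfBasisLeft_apply_tmul_apply, b.repr.apply_symm_apply,
    Finsupp.ofSupportFinite_coe]

theorem exists_eq_rTensor_of_commute [Nontrivial L] (hPE : ∀ z ∈ P, ∀ u : E, ⁅z, u⁆ = 0)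
    (hPE' : ∀ z ∈ P, ∀ u : E', ⁅z, u⁆ = 0) (hL : HasScalarCommutant K P L)
    (Ψ : E ⊗[K] L →ₗ[K] E' ⊗[K] L) (hΨ : ∀ z ∈ P, ∀ t, Ψ ⁅z, t⁆ = ⁅z, Ψ t⁆) :
    ∃ γ : E →ₗ[K] E', Ψ = γ.rTensor L := by
  have hex : ∀ u : E, ∃ u' : E', ∀ w, Ψ (u ⊗ₜ w) = u' ⊗ₜ w := fun u =>
    exists_eq_tmul_of_commute hPE' hL (Ψ ∘ₗ TensorProduct.mk K E L u) fun z hz w => by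
      simp only [LinearMap.comp_apply, TensorProduct.mk_apply, ← hΨ z hz,
        lie_tmul_of_lie_eq_zero (hPE z hz u)]
  choose γ hγ using hex
  obtain ⟨w₀, hw₀⟩ := exists_ne (0 : L)
  let γl : E →ₗ[K] E' :=
    { toFun := γ
      map_add' := fun u u' => tmul_left_injective (K := K) hw₀ <| by
        simp only [← hγ, add_tmul, map_add]
      map_smul' := fun c u => tmul_left_injective (K := K) hw₀ <| by
        show γ (c • u) ⊗ₜ w₀ = (c • γ u) ⊗ₜ w₀
        rw [← smul_tmul', ← hγ, ← hγ, ← map_smul, smul_tmul'] }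
  exact ⟨γl, TensorProduct.ext' fun u w => hγ u w⟩

theorem nonempty_lieModuleEquiv_of_tensor_right_cancel [Nontrivial L]
    (hPE : ∀ z ∈ P, ∀ u : E, ⁅z, u⁆ = 0) (hPE' : ∀ z ∈ P, ∀ u : E', ⁅z, u⁆ = 0)
    (hL : HasScalarCommutant K P L) (Ψ : E ⊗[K] L ≃ₗ⁅K,𝔤⁆ E' ⊗[K] L) :
    Nonempty (E ≃ₗ⁅K,𝔤⁆ E') := by
  obtain ⟨γ, hγ⟩ := exists_eq_rTensor_of_commute hPE hPE' hL Ψ.toLinearEquiv.toLinearMap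
    fun z _ t => Ψ.map_lie z t
  obtain ⟨δ, hδ⟩ := exists_eq_rTensor_of_commute hPE' hPE hL Ψ.symm.toLinearEquiv.toLinearMap
    fun z _ t => Ψ.symm.map_lie z t
  have hδγ : δ ∘ₗ γ = LinearMap.id := eq_of_rTensor_eq (L := L) <| by
    rw [LinearMap.rTensor_comp, ← hγ, ← hδ, LinearMap.rTensor_id]
    exact LinearMap.ext Ψ.symm_apply_apply
  have hγδ : γ ∘ₗ δ = LinearMap.id := eq_of_rTensor_eq (L := L) <| by
    rw [LinearMap.rTensor_comp, ← hγ, ← hδ, LinearMap.rTensor_id]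
    exact LinearMap.ext Ψ.apply_symm_apply
  obtain ⟨w₀, hw₀⟩ := exists_ne (0 : L)
  have hΨ : ∀ t, Ψ t = γ.rTensor L t := fun t => congrArg (fun φ : E ⊗[K] L →ₗ[K] _ => φ t) hγ
  -- `Ψ = γ ⊗ id` commutes with `𝔤`; cancel the common term `γ u ⊗ ⁅x, w₀⁆`
  have hγlie : ∀ (x : 𝔤) (u : E), γ ⁅x, u⁆ = ⁅x, γ u⁆ := by
    intro x u
    apply tmul_left_injective (K := K) hw₀
    have h := Ψ.map_lie x (u ⊗ₜ w₀)
    simp only [LieModuleEquiv.coe_toLieModuleHom] at h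
    rw [hΨ, hΨ, TensorProduct.LieModule.lie_tmul_right, map_add, LinearMap.rTensor_tmul,
      LinearMap.rTensor_tmul, LinearMap.rTensor_tmul, TensorProduct.LieModule.lie_tmul_right] at h
    exact add_right_cancel h
  exact ⟨{ γ with
    map_lie' := fun {x u} => hγlie x u
    invFun := δ
    left_inv := LinearMap.ext_iff.mp hδγ
    right_inv := LinearMap.ext_iff.mp hγδ }⟩

theorem nonempty_lieModuleEquiv_right_of_tensor [Nontrivial E] [LieModule.IsIrreducible K 𝔤 L]
    [LieModule.IsIrreducible K 𝔤 L'] (hPE : ∀ z ∈ P, ∀ u : E, ⁅z, u⁆ = 0)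
    (hPE' : ∀ z ∈ P, ∀ u : E', ⁅z, u⁆ = 0) (hP : IsDenseOn P L L')
    (Φ : E ⊗[K] L ≃ₗ⁅K,𝔤⁆ E' ⊗[K] L') : Nonempty (L ≃ₗ⁅K,𝔤⁆ L') := by
  classical
  have := (LieSubmodule.nontrivial_iff K 𝔤 L).mp inferInstance
  obtain ⟨u₀, hu₀⟩ := exists_ne (0 : E)
  obtain ⟨w₀, hw₀⟩ := exists_ne (0 : L)
  let ρ := equivFinsuppOfBasisLeft (M := E') (N := L') (Module.Basis.ofVectorSpace K E')
  let α : L →ₗ[K] E' ⊗[K] L' := Φ.toLinearEquiv.toLinearMap ∘ₗ TensorProduct.mk K E L u₀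
  obtain ⟨i, hi⟩ : ∃ i, ρ (α w₀) i ≠ 0 := by
    by_contra! h
    refine tmul_ne_zero hu₀ hw₀ (Φ.injective ?_)
    rw [map_zero]
    exact ρ.injective (by rw [map_zero]; exact Finsupp.ext h)
  let θ : L →ₗ⁅K,𝔤⁆ L' := hP.lieModuleHom (Finsupp.lapply i ∘ₗ ρ.toLinearMap ∘ₗ α)
    fun z hz w => by
      show ρ (Φ (u₀ ⊗ₜ ⁅z, w⁆)) i = ⁅z, ρ (Φ (u₀ ⊗ₜ w)) i⁆
      rw [← lie_tmul_of_lie_eq_zero (hPE z hz u₀), ← LieModuleEquiv.coe_toLieModuleHom,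
        LieModuleHom.map_lie]
      exact equivFinsuppOfBasisLeft_lie _ (hPE' z hz) _ i
  have hθ : θ ≠ 0 := fun h => hi (congrArg (fun φ : L →ₗ⁅K,𝔤⁆ L' => φ w₀) h)
  exact ⟨lieModuleEquivOfBijective θ (LieModuleHom.bijective_of_ne_zero hθ)⟩

theorem nonempty_lieModuleEquiv_of_tensor [IsAlgClosed K] (hK : ℵ₀ < #K)
    [Nontrivial E] [LieModule.IsIrreducible K 𝔤 L] [LieModule.IsIrreducible K 𝔤 L']
    (hL' : Module.rank K L' ≤ ℵ₀) (hPE : ∀ z ∈ P, ∀ u : E, ⁅z, u⁆ = 0)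
    (hPE' : ∀ z ∈ P, ∀ u : E', ⁅z, u⁆ = 0) (hLL' : IsDenseOn P L L') (hL'L' : IsDenseOn P L' L')
    (Φ : E ⊗[K] L ≃ₗ⁅K,𝔤⁆ E' ⊗[K] L') :
    Nonempty (E ≃ₗ⁅K,𝔤⁆ E') ∧ Nonempty (L ≃ₗ⁅K,𝔤⁆ L') := by
  obtain ⟨θ⟩ := nonempty_lieModuleEquiv_right_of_tensor hPE hPE' hLL' Φ
  have := (LieSubmodule.nontrivial_iff K 𝔤 L').mp inferInstance
  exact ⟨nonempty_lieModuleEquiv_of_tensor_right_cancel hPE hPE' (hL'L'.hasScalarCommutant hK hL')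
    ((LieModuleEquiv.tensorCongr LieModuleEquiv.refl θ.symm).trans Φ), ⟨θ⟩⟩

end Cancellation

section Affine

def loopEval (ξ : ℂ) : (ℤ →₀ g) →ₗ[ℂ] g :=
  Finsupp.lsum ℂ fun n => ξ ^ n • LinearMap.id

variable {g}

@[simp]
theorem loopEval_single (ξ : ℂ) (n : ℤ) (y : g) :
    loopEval g ξ (Finsupp.single n y) = ξ ^ n • y := by
  simp [loopEval]

theorem exists_loopEval_eq_zpow_smul {S : Finset ℂ} (hS : (0 : ℂ) ∉ S) (k n : ℤ) (y : g) :
    ∃ v : ℤ →₀ g, (∀ m < k, v m = 0) ∧ ∀ ξ ∈ S, loopEval g ξ v = ξ ^ n • y := by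
  -- `v = y ⊗ tⁿ⁺ᴿ p(t)`, where the polynomial `p` interpolates `ξ ↦ ξ⁻ᴿ` on `S`
  set R := (k - n).toNat
  set p := Lagrange.interpolate S id fun ξ => (ξ ^ R)⁻¹
  refine ⟨∑ j ∈ p.support, Finsupp.single (n + R + j) (p.coeff j • y), fun m hm => ?_,
    fun ξ hξ => ?_⟩
  · rw [Finsupp.finsetSum_apply]
    exact Finset.sum_eq_zero fun j _ => Finsupp.single_eq_of_ne (by omega)
  · have hξ0 : ξ ≠ 0 := ne_of_mem_of_not_mem hξ hS
    have hp : p.eval ξ = (ξ ^ R)⁻¹ :=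
      Lagrange.eval_interpolate_at_node _ Function.injective_id.injOn hξ
    calc loopEval g ξ (∑ j ∈ p.support, Finsupp.single (n + R + j) (p.coeff j • y))
        = (ξ ^ n * ξ ^ R * p.eval ξ) • y := by
          rw [map_sum, eval_eq_sum, Polynomial.sum_def, Finset.mul_sum, Finset.sum_smul]
          refine Finset.sum_congr rfl fun j _ => ?_
          rw [loopEval_single, smul_smul, zpow_add₀ hξ0, zpow_add₀ hξ0, zpow_natCast,
            zpow_natCast]
          ring_nf
      _ = ξ ^ n • y := by rw [hp, mul_assoc, mul_inv_cancel₀ (pow_ne_zero R hξ0), mul_one]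

theorem exists_loopEval_eq {S : Finset ℂ} (hS : (0 : ℂ) ∉ S) (k : ℤ) (u : ℤ →₀ g) :
    ∃ v : ℤ →₀ g, (∀ m < k, v m = 0) ∧ ∀ ξ ∈ S, loopEval g ξ v = loopEval g ξ u := by
  induction u using Finsupp.induction_linear with
  | zero => exact ⟨0, fun _ _ => rfl, fun _ _ => rfl⟩
  | add u u' hu hu' =>
    obtain ⟨v, hv, hvS⟩ := hu
    obtain ⟨v', hv', hv'S⟩ := hu'
    exact ⟨v + v', fun m hm => by simp [hv m hm, hv' m hm],
      fun ξ hξ => by rw [map_add, map_add, hvS ξ hξ, hv'S ξ hξ]⟩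
  | single n y => simpa using exists_loopEval_eq_zpow_smul hS k n y

variable {gh : Type} [LieRing gh] [LieAlgebra ℂ gh] {A : AffineAlg g gh}

def AffineAlg.vanishingAt (A : AffineAlg g gh) (S : Finset ℂ) : Set gh :=
  {z | ∃ u c, z = A.e (u, c) ∧ ∀ ξ ∈ S, loopEval g ξ u = 0}

theorem AffineAlg.rank_le_aleph0 [FiniteDimensional ℂ g] (A : AffineAlg g gh) :
    Module.rank ℂ gh ≤ Cardinal.aleph0 := by
  rw [← A.e.rank_eq, rank_prod', rank_finsupp', Module.rank_self, Cardinal.mk_int]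
  exact Cardinal.add_le_aleph0.mpr
    ⟨(mul_le_mul' le_rfl (Module.rank_lt_aleph0 ℂ g).le).trans_eq Cardinal.aleph0_mul_aleph0,
      Cardinal.one_le_aleph0⟩

section EvalModule

variable {m : ℕ} {a : Fin m → ℂ} {V : Fin m → Type} [∀ i, AddCommGroup (V i)]
  [∀ i, Module ℂ (V i)] [∀ i, LieRingModule g (V i)] [∀ i, LieModule ℂ g (V i)]
  {E : Type} [AddCommGroup E] [Module ℂ E] [LieRingModule gh E] [LieModule ℂ gh E]

theorem EvalModule.lie_tprod (hE : EvalModule A a V E) (u : ℤ →₀ g) (c : ℂ) (v : ∀ i, V i) :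
    ⁅A.e (u, c), hE.ψ.symm (PiTensorProduct.tprod ℂ v)⁆ =
      ∑ i, hE.ψ.symm
        (PiTensorProduct.tprod ℂ (Function.update v i ⁅loopEval g (a i) u, v i⁆)) := by
  have hc : A.e (u, c) = A.e (u, 0) + c • A.e (0, 1) := by
    rw [← map_smul, ← map_add, Prod.smul_mk, Prod.mk_add_mk, smul_zero, add_zero, smul_eq_mul,
      mul_one, zero_add]
  rw [hc, add_lie, smul_lie, hE.kAct, smul_zero, add_zero]
  clear hc
  induction u using Finsupp.induction_linear with
  | zero =>
    rw [Prod.mk_zero_zero, map_zero, zero_lie]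
    simp
  | add u u' hu hu' =>
    rw [← add_zero (0 : ℂ), ← Prod.mk_add_mk, map_add, add_lie, hu, hu', ← Finset.sum_add_distrib]
    simp only [map_add, add_lie, MultilinearMap.map_update_add]
  | single n y => simp [hE.act, smul_lie]

theorem EvalModule.lie_eq_zero_of_mem_vanishingAt (hE : EvalModule A a V E) {S : Finset ℂ}
    (ha : ∀ i, a i ∈ S) {z : gh} (hz : z ∈ A.vanishingAt S) (w : E) : ⁅z, w⁆ = 0 := by
  obtain ⟨u, c, rfl, hu⟩ := hz
  have : LieModule.toEnd ℂ gh E (A.e (u, c)) ∘ₗ hE.ψ.symm.toLinearMap = 0 :=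
    PiTensorProduct.ext (MultilinearMap.ext fun v => by simp [hE.lie_tprod, hu _ (ha _)])
  simpa using congrArg (fun φ : PiTensorProduct ℂ V →ₗ[ℂ] E => φ (hE.ψ w)) this

theorem EvalModule.nontrivial (hE : EvalModule A a V E) [∀ i, Nontrivial (V i)] :
    Nontrivial E := by
  choose v hv using fun i => exists_ne (0 : V i)
  have hdual : ∀ i, ∃ φ : Module.Dual ℂ (V i), φ (v i) ≠ 0 := fun i => by
    by_contra! h
    exact hv i ((Module.forall_dual_apply_eq_zero_iff ℂ (v i)).mp h)
  choose φ hφ using hdual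
  refine ⟨⟨hE.ψ.symm (PiTensorProduct.tprod ℂ v), 0, fun h => ?_⟩⟩
  have := congrArg (PiTensorProduct.dualDistrib (PiTensorProduct.tprod ℂ φ) ∘ hE.ψ) h
  simp only [Function.comp_apply, LinearEquiv.apply_symm_apply, PiTensorProduct.dualDistrib_apply,
    map_zero] at this
  exact Finset.prod_ne_zero_iff.mpr (fun i _ => hφ i) this

end EvalModule

section Restricted

variable (A) in
def IsRestricted (M : Type) [AddCommGroup M] [Module ℂ M] [LieRingModule gh M] : Prop :=
  ∀ w : M, ∃ k : ℕ, ∀ n : ℕ, k ≤ n → ∀ x : g, ⁅A.e (Finsupp.single (n : ℤ) x, 0), w⁆ = 0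

variable {M N : Type} [AddCommGroup M] [Module ℂ M] [LieRingModule gh M] [LieModule ℂ gh M]
  [AddCommGroup N] [Module ℂ N] [LieRingModule gh N] [LieModule ℂ gh N]

theorem IsRestricted.exists_lie_eq_zero (hM : IsRestricted A M) (w : M) :
    ∃ k : ℤ, ∀ v : ℤ →₀ g, (∀ m < k, v m = 0) → ⁅A.e (v, 0), w⁆ = 0 := by
  obtain ⟨k, hk⟩ := hM w
  refine ⟨k, fun v hv => ?_⟩
  let T : (ℤ →₀ g) →ₗ[ℂ] M :=
    (LieModule.toEnd ℂ gh M).toLinearMap.flip w ∘ₗ A.e.toLinearMap ∘ₗ LinearMap.inl ℂ _ ℂ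
  change T v = 0
  rw [← v.sum_single, map_finsuppSum]
  refine Finset.sum_eq_zero fun m hm => ?_
  have hkm : (k : ℤ) ≤ m := not_lt.mp fun h => Finsupp.mem_support_iff.mp hm (hv m h)
  obtain ⟨n, rfl⟩ := Int.eq_ofNat_of_zero_le (by omega : (0 : ℤ) ≤ m)
  exact hk n (by omega) (v n)

theorem IsRestricted.isDenseOn (hM : IsRestricted A M) (hN : IsRestricted A N) {S : Finset ℂ}
    (hS : (0 : ℂ) ∉ S) : IsDenseOn (A.vanishingAt S) M N := by
  intro x w w'
  obtain ⟨k, hk⟩ := hM.exists_lie_eq_zero w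
  obtain ⟨k', hk'⟩ := hN.exists_lie_eq_zero w'
  obtain ⟨⟨u, c⟩, rfl⟩ := A.e.surjective x
  obtain ⟨v, hv, hvS⟩ := exists_loopEval_eq hS (max k k') u
  have hx : A.e (u, c) = A.e (u - v, c) + A.e (v, 0) := by
    rw [← map_add, Prod.mk_add_mk, sub_add_cancel, add_zero]
  refine ⟨A.e (u - v, c), ⟨u - v, c, rfl, fun ξ hξ => by rw [map_sub, hvS ξ hξ, sub_self]⟩,
    ?_, ?_⟩
  · rw [hx, add_lie, hk v fun m hm => hv m (lt_max_of_lt_left hm), add_zero]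
  · rw [hx, add_lie, hk' v fun m hm => hv m (lt_max_of_lt_right hm), add_zero]

end Restricted

end Affine

theorem statement17_general (g : Type) [LieRing g] [LieAlgebra ℂ g] [FiniteDimensional ℂ g]
    (D : TriangularData g)
    (gh : Type) [LieRing gh] [LieAlgebra ℂ gh] (A : AffineAlg g gh)
    (m : ℕ) (a : Fin m → ℂ) (ha : ∀ i, a i ≠ 0)
    (lam : Fin m → Module.Dual ℂ D.H)
    (V : Fin m → Type) [∀ i, AddCommGroup (V i)] [∀ i, Module ℂ (V i)]
    [∀ i, LieRingModule g (V i)] [∀ i, LieModule ℂ g (V i)]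
    (hV : ∀ i, IsHWModule D (lam i) (V i))
    (E : Type) [AddCommGroup E] [Module ℂ E] [LieRingModule gh E] [LieModule ℂ gh E]
    (hE : EvalModule A a V E)
    (m' : ℕ) (a' : Fin m' → ℂ) (ha' : ∀ i, a' i ≠ 0)
    (V' : Fin m' → Type) [∀ i, AddCommGroup (V' i)] [∀ i, Module ℂ (V' i)]
    [∀ i, LieRingModule g (V' i)] [∀ i, LieModule ℂ g (V' i)]
    (E' : Type) [AddCommGroup E'] [Module ℂ E'] [LieRingModule gh E'] [LieModule ℂ gh E']
    (hE' : EvalModule A a' V' E')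
    (L : Type) [AddCommGroup L] [Module ℂ L] [LieRingModule gh L] [LieModule ℂ gh L]
    (hLirr : IsSimpleOrder (LieSubmodule ℂ gh L))
    (L' : Type) [AddCommGroup L'] [Module ℂ L'] [LieRingModule gh L'] [LieModule ℂ gh L']
    (hLirr' : IsSimpleOrder (LieSubmodule ℂ gh L'))
    (hL : ∀ (w : L) (w' : L'), ∃ k : ℕ, ∀ n : ℕ, k ≤ n → ∀ x : g,
      ⁅A.e (Finsupp.single (n : ℤ) x, 0), w⁆ = 0 ∧
      ⁅A.e (Finsupp.single (n : ℤ) x, 0), w'⁆ = 0) :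
    Nonempty ((E ⊗[ℂ] L) ≃ₗ⁅ℂ,gh⁆ (E' ⊗[ℂ] L')) ↔
      (Nonempty (E ≃ₗ⁅ℂ,gh⁆ E') ∧ Nonempty (L ≃ₗ⁅ℂ,gh⁆ L')) := by
  refine ⟨fun ⟨Φ⟩ => ?_, fun ⟨⟨eE⟩, ⟨eL⟩⟩ => ⟨LieModuleEquiv.tensorCongr eE eL⟩⟩
  have hLres : IsRestricted A L := fun w => (hL w 0).imp fun _ hk n hn x => (hk n hn x).1
  have hL'res : IsRestricted A L' := fun w' => (hL 0 w').imp fun _ hk n hn x => (hk n hn x).2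
  let S := Finset.univ.image a ∪ Finset.univ.image a'
  have hS : (0 : ℂ) ∉ S := by simp [S, ha, ha']
  have : ∀ i, Nontrivial (V i) := fun i => ⟨⟨(hV i).v₀, 0, (hV i).ne⟩⟩
  have := hE.nontrivial
  have hℂ : Cardinal.aleph0 < Cardinal.mk ℂ := Cardinal.mk_complex ▸ Cardinal.aleph0_lt_continuum
  exact nonempty_lieModuleEquiv_of_tensor hℂ (LieModule.rank_le_aleph0 A.rank_le_aleph0)
    (fun _ => hE.lie_eq_zero_of_mem_vanishingAt fun i => by simp [S])
    (fun _ => hE'.lie_eq_zero_of_mem_vanishingAt fun i => by simp [S])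
    (hLres.isDenseOn hL'res hS) (hL'res.isDenseOn hL'res hS) Φ

/-- for irreducible `ĝ`-modules `L, L'` on which every vector is
killed by `g ⊗ tᵏℂ[t]` for large `k`, and `λ ≠ 0`:
`E(λ,a) ⊗ L ≅ E(λ',a') ⊗ L'` iff `E(λ,a) ≅ E(λ',a')` and `L ≅ L'`. -/
theorem statement17 (g : Type) [LieRing g] [LieAlgebra ℂ g] [FiniteDimensional ℂ g]
    [LieAlgebra.IsSimple ℂ g] (D : TriangularData g)
    (gh : Type) [LieRing gh] [LieAlgebra ℂ gh] (A : AffineAlg g gh)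
    (m : ℕ) (a : Fin m → ℂ) (ha : ∀ i, a i ≠ 0) (hinj : Function.Injective a)
    (lam : Fin m → Module.Dual ℂ D.H) (hlam : lam ≠ 0)
    (V : Fin m → Type) [∀ i, AddCommGroup (V i)] [∀ i, Module ℂ (V i)]
    [∀ i, LieRingModule g (V i)] [∀ i, LieModule ℂ g (V i)]
    (hV : ∀ i, IsHWModule D (lam i) (V i))
    (E : Type) [AddCommGroup E] [Module ℂ E] [LieRingModule gh E] [LieModule ℂ gh E]
    (hE : EvalModule A a V E)
    (m' : ℕ) (a' : Fin m' → ℂ) (ha' : ∀ i, a' i ≠ 0) (hinj' : Function.Injective a')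
    (lam' : Fin m' → Module.Dual ℂ D.H)
    (V' : Fin m' → Type) [∀ i, AddCommGroup (V' i)] [∀ i, Module ℂ (V' i)]
    [∀ i, LieRingModule g (V' i)] [∀ i, LieModule ℂ g (V' i)]
    (hV' : ∀ i, IsHWModule D (lam' i) (V' i))
    (E' : Type) [AddCommGroup E'] [Module ℂ E'] [LieRingModule gh E'] [LieModule ℂ gh E']
    (hE' : EvalModule A a' V' E')
    (L : Type) [AddCommGroup L] [Module ℂ L] [LieRingModule gh L] [LieModule ℂ gh L]
    (hLirr : IsSimpleOrder (LieSubmodule ℂ gh L))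
    (L' : Type) [AddCommGroup L'] [Module ℂ L'] [LieRingModule gh L'] [LieModule ℂ gh L']
    (hLirr' : IsSimpleOrder (LieSubmodule ℂ gh L'))
    (hL : ∀ (w : L) (w' : L'), ∃ k : ℕ, ∀ n : ℕ, k ≤ n → ∀ x : g,
      ⁅A.e (Finsupp.single (n : ℤ) x, 0), w⁆ = 0 ∧
      ⁅A.e (Finsupp.single (n : ℤ) x, 0), w'⁆ = 0) :
    Nonempty ((E ⊗[ℂ] L) ≃ₗ⁅ℂ,gh⁆ (E' ⊗[ℂ] L')) ↔
      (Nonempty (E ≃ₗ⁅ℂ,gh⁆ E') ∧ Nonempty (L ≃ₗ⁅ℂ,gh⁆ L')) :=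
  statement17_general g D gh A m a ha lam V hV E hE m' a' ha' V' E' hE' L hLirr L' hLirr' hL

end AffinePaper
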